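/- Let {A_i}_{i=1}^p be non-empty closed subsets of a G-metric space (X,G) and let T : ⋃_{i=1}^p A_i → ⋃_{i=1}^p A_i be a cyclical operator. Suppose there are an altering distance function φ, a function ψ as below, and constants α, δ with 0 ≤ α ≤ 1/2 and 0 < α + δ ≤ 1 such that for every i ∈ {1,…,p}, every x ∈ A_i and every y ∈ A_{i+1}, φ(G(Tx,Ty,Ty)) ≤ φ(α·G(x,Ty,Ty) + δ·G(y,y,Tx)) − ψ(G(x,Ty,Ty), G(y,y,Tx), G(y,y,Tx)). Then for any x₀ ∈ ⋃_{i=1}^p A_i, the Picard iteration x_{n+1} = T x_n satisfies lim_{n→∞} G(x_n, x_{n+1}, x_{n+1}) = 0 and {x_n} is a G-Cauchy sequence. -/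

import Mathlib

/-- A sequence `s` in `X` `G`-converges to `x`: `lim_{n,m→∞} G(x, s n, s m) = 0`. -/
def GConvergesTo {X : Type*} (G : X → X → X → ℝ) (s : ℕ → X) (x : X) : Prop :=
  ∀ ε > 0, ∃ N : ℕ, ∀ n ≥ N, ∀ m ≥ N, G x (s n) (s m) < ε

/-- A sequence `s` in `X` is `G`-Cauchy: `lim_{n,m,ℓ→∞} G(s n, s m, s ℓ) = 0`. -/
def GCauchySeq {X : Type*} (G : X → X → X → ℝ) (s : ℕ → X) : Prop :=
  ∀ ε > 0, ∃ N : ℕ, ∀ n ≥ N, ∀ m ≥ N, ∀ l ≥ N, G (s n) (s m) (s l) < ε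

/-- `(X, G)` is a complete `G`-metric space: every `G`-Cauchy sequence `G`-converges. -/
def GComplete {X : Type*} (G : X → X → X → ℝ) : Prop :=
  ∀ s : ℕ → X, GCauchySeq G s → ∃ x : X, GConvergesTo G s x

/-- A subset `A` is closed: the `G`-limit of every `G`-convergent sequence of points
of `A` belongs to `A`. -/
def GClosed {X : Type*} (G : X → X → X → ℝ) (A : Set X) : Prop :=
  ∀ s : ℕ → X, (∀ n, s n ∈ A) → ∀ x : X, GConvergesTo G s x → x ∈ A

/-- `G : X × X × X → [0,∞)` is a generalized metric ("G-metric") on `X`. -/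
structure IsGMetric {X : Type*} (G : X → X → X → ℝ) : Prop where
  nonneg : ∀ x y z, 0 ≤ G x y z
  eq_zero : ∀ x, G x x x = 0
  pos_of_ne : ∀ x y, x ≠ y → 0 < G x x y
  le_of_ne : ∀ x y z, y ≠ z → G x x y ≤ G x y z
  symm_right : ∀ x y z, G x y z = G x z y
  symm_left : ∀ x y z, G x y z = G y x z
  rectangle : ∀ x y z a, G x y z ≤ G x a a + G a y z

/-- An altering distance function `φ : [0,∞) → [0,∞)`: continuous, nondecreasing,
and vanishing exactly at `0`. -/
structure IsAlteringDistance (φ : ℝ → ℝ) : Prop where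
  nonneg : ∀ t, 0 ≤ t → 0 ≤ φ t
  continuous : ContinuousOn φ (Set.Ici 0)
  mono : MonotoneOn φ (Set.Ici 0)
  eq_zero_iff : ∀ t, 0 ≤ t → (φ t = 0 ↔ t = 0)

/-- `ψ : [0,∞)³ → [0,∞)` continuous with `ψ(x,y,z) = 0 ↔ x = y = z = 0`. -/
structure IsPsiFun (ψ : ℝ → ℝ → ℝ → ℝ) : Prop where
  nonneg : ∀ x y z, 0 ≤ x → 0 ≤ y → 0 ≤ z → 0 ≤ ψ x y z
  continuous : ContinuousOn (fun q : ℝ × ℝ × ℝ => ψ q.1 q.2.1 q.2.2)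
    (Set.Ici 0 ×ˢ Set.Ici 0 ×ˢ Set.Ici 0)
  eq_zero_iff : ∀ x y z, 0 ≤ x → 0 ≤ y → 0 ≤ z →
    (ψ x y z = 0 ↔ x = 0 ∧ y = 0 ∧ z = 0)

open Filter
open Fin.NatCast

section helper
variable {X : Type*} {G : X → X → X → ℝ}

lemma Gaab (hG : IsGMetric G) (a b : X) : G a a b = G b a a := by
  rw [hG.symm_right, hG.symm_left]

lemma Gtwo (hG : IsGMetric G) (a b : X) : G a a b ≤ 2 * G a b b := by
  have h := hG.rectangle a a b b
  have h2 : G b a b = G a b b := hG.symm_left b a b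
  linarith

lemma Grev (hG : IsGMetric G) (a b : X) : G b a a ≤ 2 * G a b b := by
  rw [← Gaab hG]; exact Gtwo hG a b

lemma Gtri (hG : IsGMetric G) (a b c : X) : G a c c ≤ G a b b + G b c c :=
  hG.rectangle a c c b

end helper

set_option maxHeartbeats 1000000 in
private lemma cyclic_aux {X : Type*} {G : X → X → X → ℝ} (hG : IsGMetric G)
    {p : ℕ} [NeZero p] {A : Fin p → Set X} {T : X → X}
    {φ : ℝ → ℝ} {ψ : ℝ → ℝ → ℝ → ℝ}
    (hφ : IsAlteringDistance φ) (hψ : IsPsiFun ψ)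
    {α δ : ℝ} (hα0 : 0 ≤ α) (hα1 : α ≤ 1 / 2)
    (hαδ0 : 0 < α + δ) (hαδ1 : α + δ ≤ 1)
    (hcontr : ∀ i : Fin p, ∀ x ∈ A i, ∀ y ∈ A (i + 1),
      φ (G (T x) (T y) (T y)) ≤
        φ (α * G x (T y) (T y) + δ * G y y (T x)) -
          ψ (G x (T y) (T y)) (G y y (T x)) (G y y (T x)))
    (x : ℕ → X) (i₀ : Fin p)
    (hmem : ∀ n : ℕ, x n ∈ A (i₀ + (n : Fin p)))
    (hx : ∀ n, x (n + 1) = T (x n)) :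
    Tendsto (fun n => G (x n) (x (n + 1)) (x (n + 1))) atTop (nhds 0) ∧
      ∀ ε > 0, ∃ N : ℕ, ∀ n ≥ N, ∀ m ≥ N, ∀ l ≥ N, G (x n) (x m) (x l) < ε := by
  classical
  set d : ℕ → ℝ := fun n => G (x n) (x (n + 1)) (x (n + 1)) with hddef
  set g : ℕ → ℝ := fun n => G (x n) (x (n + 2)) (x (n + 2)) with hgdef
  have hdnn : ∀ n, 0 ≤ d n := fun n => hG.nonneg _ _ _
  have hgnn : ∀ n, 0 ≤ g n := fun n => hG.nonneg _ _ _
  have hφ0 : φ 0 = 0 := (hφ.eq_zero_iff 0 le_rfl).mpr rfl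
  have hψ00 : ψ 0 0 0 = 0 := (hψ.eq_zero_iff 0 0 0 le_rfl le_rfl le_rfl).mpr ⟨rfl, rfl, rfl⟩
  -- contraction for aligned pairs
  have hK : ∀ n m : ℕ, ((m : Fin p) = (n : Fin p) + 1) →
      φ (G (x (n + 1)) (x (m + 1)) (x (m + 1))) ≤
        φ (α * G (x n) (x (m + 1)) (x (m + 1)) + δ * G (x m) (x m) (x (n + 1))) -
          ψ (G (x n) (x (m + 1)) (x (m + 1))) (G (x m) (x m) (x (n + 1)))
            (G (x m) (x m) (x (n + 1))) := by
    intro n m hnm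
    have h1 : x m ∈ A (i₀ + (n : Fin p) + 1) := by
      have h := hmem m
      rw [hnm, ← add_assoc] at h
      exact h
    have h := hcontr (i₀ + (n : Fin p)) (x n) (hmem n) (x m) h1
    rw [← hx n, ← hx m] at h
    exact h
  have hd1 : ∀ n, φ (d (n + 1)) ≤ φ (α * g n) - ψ (g n) 0 0 := by
    intro n
    have h := hK n (n + 1) (by push_cast; ring)
    rw [hG.eq_zero, mul_zero, add_zero] at h
    exact h
  have hg_le : ∀ n, g n ≤ d n + d (n + 1) := fun n => Gtri hG _ (x (n + 1)) _
  -- d is antitone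
  have hmono : ∀ n, d (n + 1) ≤ d n := by
    intro n
    by_contra hlt
    push_neg at hlt
    have hαg : α * g n ≤ d (n + 1) := by nlinarith [hg_le n, hgnn n, hdnn n]
    have hφle : φ (α * g n) ≤ φ (d (n + 1)) :=
      hφ.mono (Set.mem_Ici.mpr (mul_nonneg hα0 (hgnn n)))
        (Set.mem_Ici.mpr (hdnn (n + 1))) hαg
    have h1 := hd1 n
    have hψnn := hψ.nonneg (g n) 0 0 (hgnn n) le_rfl le_rfl
    have hψ0 : ψ (g n) 0 0 = 0 := le_antisymm (by linarith) hψnn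
    have hg0 : g n = 0 := ((hψ.eq_zero_iff _ _ _ (hgnn n) le_rfl le_rfl).mp hψ0).1
    have h2 := hd1 n
    rw [hg0, mul_zero, hψ00, hφ0] at h2
    have hφnn := hφ.nonneg _ (hdnn (n + 1))
    have hd0' : d (n + 1) = 0 :=
      (hφ.eq_zero_iff _ (hdnn (n + 1))).mp (le_antisymm (by linarith) hφnn)
    linarith [hdnn n]
  have hanti : Antitone d := antitone_nat_of_succ_le hmono
  have hφd : ∀ n, φ (α * g n) ≤ φ (d n) := by
    intro n
    have hαg : α * g n ≤ d n := by nlinarith [hg_le n, hgnn n, hmono n, hdnn (n + 1)]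
    exact hφ.mono (Set.mem_Ici.mpr (mul_nonneg hα0 (hgnn n)))
      (Set.mem_Ici.mpr (hdnn n)) hαg
  -- summability of ψ (g n) 0 0
  have key : ∀ N, (∑ j ∈ Finset.range N, ψ (g j) 0 0) ≤ φ (d 0) - φ (d N) := by
    intro N
    induction N with
    | zero => simp
    | succ N ih =>
      rw [Finset.sum_range_succ]
      have h1 := hd1 N
      have h2 := hφd N
      linarith
  have hpsum : Summable (fun n => ψ (g n) 0 0) :=
    summable_of_sum_range_le (c := φ (d 0)) (fun n => hψ.nonneg _ _ _ (hgnn n) le_rfl le_rfl)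
      (fun N => le_trans (key N) (by linarith [hφ.nonneg _ (hdnn N)]))
  have hψt : Tendsto (fun n => ψ (g n) 0 0) atTop (nhds 0) := hpsum.tendsto_atTop_zero
  -- the slice t ↦ ψ t 0 0 is continuous on [0, ∞)
  have hcontψ1 : ContinuousOn (fun t : ℝ => ψ t 0 0) (Set.Ici 0) := by
    have h1 : ContinuousOn (fun t : ℝ => ((t, (0 : ℝ), (0 : ℝ)) : ℝ × ℝ × ℝ)) (Set.Ici 0) :=
      (Continuous.continuousOn (by continuity))
    exact hψ.continuous.comp h1 (fun t ht => ⟨ht, Set.mem_Ici.mpr le_rfl, Set.mem_Ici.mpr le_rfl⟩)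
  -- g tends to 0
  have hg0t : Tendsto g atTop (nhds 0) := by
    have hgub : ∀ n, g n ≤ 2 * d 0 := by
      intro n
      have h1 := hg_le n
      have h2 := hanti (Nat.zero_le n)
      have h3 := hanti (Nat.zero_le (n + 1))
      linarith
    rw [Metric.tendsto_atTop]
    intro ε hε
    set B := max ε (2 * d 0) with hB
    obtain ⟨t₀, ht₀K, ht₀min⟩ := (isCompact_Icc (a := ε) (b := B)).exists_isMinOn
      ⟨ε, le_rfl, le_max_left _ _⟩
      (hcontψ1.mono (fun t ht => le_trans hε.le ht.1))
    have ht₀pos : 0 < t₀ := lt_of_lt_of_le hε ht₀K.1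
    have hc : 0 < ψ t₀ 0 0 := by
      rcases lt_or_eq_of_le (hψ.nonneg t₀ 0 0 ht₀pos.le le_rfl le_rfl) with h | h
      · exact h
      · exfalso
        have := ((hψ.eq_zero_iff t₀ 0 0 ht₀pos.le le_rfl le_rfl).mp h.symm).1
        linarith
    obtain ⟨N, hN⟩ := Metric.tendsto_atTop.mp hψt (ψ t₀ 0 0) hc
    refine ⟨N, fun n hn => ?_⟩
    rw [Real.dist_eq, sub_zero, abs_of_nonneg (hgnn n)]
    by_contra hge
    push_neg at hge
    have hmemK : g n ∈ Set.Icc ε B := ⟨hge, le_trans (hgub n) (le_max_right _ _)⟩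
    have hmin := (isMinOn_iff.mp ht₀min) (g n) hmemK
    have hNn := hN n hn
    rw [Real.dist_eq, sub_zero, abs_of_nonneg (hψ.nonneg _ _ _ (hgnn n) le_rfl le_rfl)] at hNn
    linarith
  -- φ (d n) tends to 0
  have hφc : ∀ (c : ℝ), 0 ≤ c → ∀ (f : ℕ → ℝ), (∀ᶠ k in atTop, 0 ≤ f k) →
      Tendsto f atTop (nhds c) → Tendsto (fun k => φ (f k)) atTop (nhds (φ c)) := by
    intro c hc f hf hft
    have h1 : Tendsto f atTop (nhdsWithin c (Set.Ici 0)) :=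
      tendsto_nhdsWithin_of_tendsto_nhds_of_eventually_within _ hft hf
    exact (hφ.continuous c hc).tendsto.comp h1
  have hαgt : Tendsto (fun n => α * g n) atTop (nhds 0) := by
    simpa using hg0t.const_mul α
  have hφαg : Tendsto (fun n => φ (α * g n)) atTop (nhds 0) := by
    have := hφc 0 le_rfl (fun n => α * g n)
      (Eventually.of_forall (fun n => mul_nonneg hα0 (hgnn n))) hαgt
    rwa [hφ0] at this
  have hφdt : Tendsto (fun n => φ (d n)) atTop (nhds 0) := by
    rw [← tendsto_add_atTop_iff_nat 1]
    refine tendsto_of_tendsto_of_tendsto_of_le_of_le tendsto_const_nhds hφαg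
      (fun n => hφ.nonneg _ (hdnn (n + 1))) (fun n => ?_)
    have h1 := hd1 n
    have h2 := hψ.nonneg (g n) 0 0 (hgnn n) le_rfl le_rfl
    linarith
  have hd0t : Tendsto d atTop (nhds 0) := by
    rw [Metric.tendsto_atTop]
    intro ε hε
    have hφε : 0 < φ ε :=
      lt_of_le_of_ne (hφ.nonneg ε hε.le)
        (fun h => hε.ne' ((hφ.eq_zero_iff ε hε.le).mp h.symm))
    obtain ⟨N, hN⟩ := Metric.tendsto_atTop.mp hφdt (φ ε) hφε
    refine ⟨N, fun n hn => ?_⟩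
    rw [Real.dist_eq, sub_zero, abs_of_nonneg (hdnn n)]
    by_contra h
    push_neg at h
    have hmle := hφ.mono (Set.mem_Ici.mpr hε.le) (Set.mem_Ici.mpr (hdnn n)) h
    have hNn := hN n hn
    rw [Real.dist_eq, sub_zero, abs_of_nonneg (hφ.nonneg _ (hdnn n))] at hNn
    linarith
  -- chain bound
  have hchain0 : ∀ n k : ℕ, G (x n) (x (n + k)) (x (n + k)) ≤ (k : ℝ) * d n := by
    intro n k
    induction k with
    | zero => simp [hG.eq_zero]
    | succ k ih =>
      have htri : G (x n) (x (n + k + 1)) (x (n + k + 1)) ≤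
          G (x n) (x (n + k)) (x (n + k)) + G (x (n + k)) (x (n + k + 1)) (x (n + k + 1)) :=
        Gtri hG _ (x (n + k)) _
      have hdle : d (n + k) ≤ d n := hanti (Nat.le_add_right n k)
      have hcast : ((k + 1 : ℕ) : ℝ) = (k : ℝ) + 1 := by push_cast; ring
      have hgoal : G (x n) (x (n + (k + 1))) (x (n + (k + 1))) ≤ ((k : ℝ) + 1) * d n := by
        have he : n + (k + 1) = n + k + 1 := by omega
        rw [he]
        have : G (x (n + k)) (x (n + k + 1)) (x (n + k + 1)) = d (n + k) := rfl
        nlinarith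
      rw [hcast]
      exact hgoal
  
  -- pairwise Cauchy claim
  have hpair : ∀ ε > 0, ∃ N : ℕ, ∀ n ≥ N, ∀ m ≥ N, G (x n) (x m) (x m) < ε := by
    by_contra hcon
    push_neg at hcon
    obtain ⟨ε, hε, hcc⟩ := hcon
    have hp1 : 0 < p := Nat.pos_of_ne_zero (NeZero.ne p)
    have hpR : (0 : ℝ) < p := by exact_mod_cast hp1
    have hp1R : (1 : ℝ) ≤ p := by exact_mod_cast hp1
    obtain ⟨K₀, hK₀⟩ := Metric.tendsto_atTop.mp hd0t (ε / (8 * p)) (by positivity)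
    have hdK₀ : ∀ j, K₀ ≤ j → d j < ε / (8 * p) := by
      intro j hj
      have h := hK₀ j hj
      rwa [Real.dist_eq, sub_zero, abs_of_nonneg (hdnn j)] at h
    have hEx : ∀ k : ℕ, ∃ n M : ℕ, k + K₀ ≤ n ∧ n < M ∧ ((M : Fin p) = (n : Fin p) + 1) ∧
        ε / 4 ≤ G (x n) (x M) (x M) ∧ G (x n) (x M) (x M) ≤ ε / 4 + (p : ℝ) * d (k + K₀) := by
      intro k
      set N := k + K₀ with hNdef
      have hNK₀ : K₀ ≤ N := Nat.le_add_left K₀ k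
      obtain ⟨a, ha, b, hb, hab⟩ := hcc N
      have hane : a ≠ b := by
        intro h
        subst h
        rw [hG.eq_zero] at hab
        linarith
      obtain ⟨n₁, m₁, hn₁, hnm₁, hs2⟩ :
          ∃ n₁ m₁ : ℕ, N ≤ n₁ ∧ n₁ < m₁ ∧ ε / 2 ≤ G (x n₁) (x m₁) (x m₁) := by
        rcases lt_or_gt_of_ne hane with h | h
        · exact ⟨a, b, ha, h, by linarith⟩
        · refine ⟨b, a, hb, h, ?_⟩
          have e1 : G (x b) (x b) (x a) = G (x a) (x b) (x b) := Gaab hG (x b) (x a)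
          have e2 : G (x b) (x b) (x a) ≤ 2 * G (x b) (x a) (x a) := Gtwo hG (x b) (x a)
          linarith
      set j := ((n₁ : Fin p) + 1 - (m₁ : Fin p)).val with hjdef
      have hjlt : j < p := Fin.is_lt _
      set M₁ := m₁ + j with hM₁def
      have hcast₁ : ((M₁ : ℕ) : Fin p) = (n₁ : Fin p) + 1 := by
        show ((m₁ + j : ℕ) : Fin p) = (n₁ : Fin p) + 1
        rw [Nat.cast_add, hjdef, Fin.cast_val_eq_self]
        abel
      have hdN : d N < ε / (8 * p) := hdK₀ N hNK₀
      have hdm₁ : d m₁ ≤ d N := hanti (le_trans hn₁ (le_of_lt hnm₁))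
      have hch₁ : G (x m₁) (x M₁) (x M₁) ≤ (p : ℝ) * d N := by
        have c1 := hchain0 m₁ j
        have c2 : (j : ℝ) ≤ (p : ℝ) := by exact_mod_cast hjlt.le
        have c3 : (j : ℝ) * d m₁ ≤ (p : ℝ) * d N :=
          mul_le_mul c2 hdm₁ (hdnn m₁) (by positivity)
        linarith
      have h8 : (p : ℝ) * d N ≤ ε / 8 := by
        have h3' : (p : ℝ) * d N ≤ (p : ℝ) * (ε / (8 * p)) :=
          mul_le_mul_of_nonneg_left hdN.le (by positivity)
        have h4' : (p : ℝ) * (ε / (8 * p)) = ε / 8 := by field_simp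
        linarith
      have hs4 : ε / 4 ≤ G (x n₁) (x M₁) (x M₁) := by
        have htri : G (x n₁) (x m₁) (x m₁) ≤
            G (x n₁) (x M₁) (x M₁) + G (x M₁) (x m₁) (x m₁) := Gtri hG _ (x M₁) _
        have h2' : G (x M₁) (x m₁) (x m₁) ≤ 2 * G (x m₁) (x M₁) (x M₁) :=
          Grev hG (x m₁) (x M₁)
        linarith
      have hQex : ∃ M, n₁ < M ∧ ((M : Fin p) = (n₁ : Fin p) + 1) ∧
          ε / 4 ≤ G (x n₁) (x M) (x M) :=
        ⟨M₁, lt_of_lt_of_le hnm₁ (Nat.le_add_right _ _), hcast₁, hs4⟩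
      obtain ⟨hM₀gt, hM₀cast, hM₀ge⟩ := Nat.find_spec hQex
      set M₀ := Nat.find hQex with hM₀def
      refine ⟨n₁, M₀, hn₁, hM₀gt, hM₀cast, hM₀ge, ?_⟩
      have hdvd : p ∣ (M₀ - (n₁ + 1)) := by
        have hcasteq : ((M₀ : ℕ) : Fin p) = ((n₁ + 1 : ℕ) : Fin p) := by
          rw [hM₀cast]
          push_cast
          ring
        have hval := congrArg Fin.val hcasteq
        rw [Fin.val_natCast, Fin.val_natCast] at hval
        exact (Nat.modEq_iff_dvd' hM₀gt).mp hval.symm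
      by_cases hMeq : M₀ = n₁ + 1
      · exfalso
        have heq : G (x n₁) (x M₀) (x M₀) = d n₁ := by rw [hMeq]
        have hd' : d n₁ < ε / (8 * p) := hdK₀ n₁ (le_trans hNK₀ hn₁)
        have h5' : ε / (8 * p) ≤ ε / 8 := by
          rw [div_le_div_iff₀ (by positivity) (by norm_num)]
          nlinarith
        rw [heq] at hM₀ge
        linarith
      · have htk : p ≤ M₀ - (n₁ + 1) :=
          Nat.le_of_dvd (Nat.pos_of_ne_zero (fun h0 => hMeq (by omega))) hdvd
        set K := M₀ - p with hKdef
        have hKgt : n₁ < K := by omega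
        have hM₀K : M₀ = K + p := by omega
        have hKcast : ((K : ℕ) : Fin p) = (n₁ : Fin p) + 1 := by
          have hpp : ((K + p : ℕ) : Fin p) = (K : Fin p) := by
            push_cast [Fin.natCast_self]
            simp
          rw [← hpp, ← hM₀K]
          exact hM₀cast
        have hKlt : K < M₀ := by omega
        have hKmin := Nat.find_min hQex hKlt
        have hsK : G (x n₁) (x K) (x K) < ε / 4 := by
          by_contra hc2
          push_neg at hc2
          exact hKmin ⟨hKgt, hKcast, hc2⟩
        have htri : G (x n₁) (x M₀) (x M₀) ≤
            G (x n₁) (x K) (x K) + G (x K) (x M₀) (x M₀) := Gtri hG _ (x K) _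
        have hch : G (x K) (x M₀) (x M₀) ≤ (p : ℝ) * d K := by
          have c := hchain0 K p
          rw [← hM₀K] at c
          exact c
        have hdKN : d K ≤ d N := hanti (by omega)
        have hpd : (p : ℝ) * d K ≤ (p : ℝ) * d N := mul_le_mul_of_nonneg_left hdKN (by positivity)
        linarith
    choose nn MM hc1 hc2 hc3 hc4 hc5 using hEx
    set e : ℕ → ℝ := fun k => d (k + K₀) with hedef
    have he : Tendsto e atTop (nhds 0) := hd0t.comp (tendsto_add_atTop_nat K₀)
    have henn : ∀ k, 0 ≤ e k := fun k => hdnn _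
    have hdn : ∀ k, d (nn k) ≤ e k := fun k => hanti (hc1 k)
    have hdM : ∀ k, d (MM k) ≤ e k := fun k => hanti (le_trans (hc1 k) (le_of_lt (hc2 k)))
    set s : ℕ → ℝ := fun k => G (x (nn k)) (x (MM k)) (x (MM k)) with hsdef
    set u : ℕ → ℝ := fun k => G (x (nn k)) (x (MM k + 1)) (x (MM k + 1)) with hudef
    set v : ℕ → ℝ := fun k => G (x (MM k)) (x (MM k)) (x (nn k + 1)) with hvdef
    set s' : ℕ → ℝ := fun k => G (x (nn k + 1)) (x (MM k + 1)) (x (MM k + 1)) with hs'def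
    have hsnn : ∀ k, 0 ≤ s k := fun k => hG.nonneg _ _ _
    have hunn : ∀ k, 0 ≤ u k := fun k => hG.nonneg _ _ _
    have hvnn : ∀ k, 0 ≤ v k := fun k => hG.nonneg _ _ _
    have hs'nn : ∀ k, 0 ≤ s' k := fun k => hG.nonneg _ _ _
    have hveq : ∀ k, v k = G (x (nn k + 1)) (x (MM k)) (x (MM k)) := fun k =>
      Gaab hG (x (MM k)) (x (nn k + 1))
    have hu_ub : ∀ k, u k ≤ s k + e k := by
      intro k
      have htri : u k ≤ s k + d (MM k) := Gtri hG _ (x (MM k)) _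
      linarith [hdM k]
    have hu_lb : ∀ k, s k - 2 * e k ≤ u k := by
      intro k
      have htri : s k ≤ u k + G (x (MM k + 1)) (x (MM k)) (x (MM k)) :=
        Gtri hG _ (x (MM k + 1)) _
      have h2' : G (x (MM k + 1)) (x (MM k)) (x (MM k)) ≤ 2 * d (MM k) :=
        Grev hG (x (MM k)) (x (MM k + 1))
      linarith [hdM k]
    have hsv : ∀ k, s k ≤ d (nn k) + v k := by
      intro k
      rw [hveq k]
      exact Gtri hG _ (x (nn k + 1)) _
    have hv_ub : ∀ k, v k ≤ s k + 2 * e k := by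
      intro k
      have h1' : v k ≤ G (x (nn k + 1)) (x (nn k)) (x (nn k)) + s k := by
        rw [hveq k]
        exact Gtri hG _ (x (nn k)) _
      have h2' : G (x (nn k + 1)) (x (nn k)) (x (nn k)) ≤ 2 * d (nn k) :=
        Grev hG (x (nn k)) (x (nn k + 1))
      linarith [hdn k]
    have hv_lb : ∀ k, s k - e k ≤ v k := by
      intro k
      linarith [hsv k, hdn k]
    have hs'_ub : ∀ k, s' k ≤ s k + 3 * e k := by
      intro k
      have h1' : s' k ≤ G (x (nn k + 1)) (x (nn k)) (x (nn k)) + u k :=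
        Gtri hG _ (x (nn k)) _
      have h2' : G (x (nn k + 1)) (x (nn k)) (x (nn k)) ≤ 2 * d (nn k) :=
        Grev hG (x (nn k)) (x (nn k + 1))
      linarith [hdn k, hu_ub k]
    have hs'_lb : ∀ k, s k - 3 * e k ≤ s' k := by
      intro k
      have h1' : v k ≤ s' k + G (x (MM k + 1)) (x (MM k)) (x (MM k)) := by
        rw [hveq k]
        exact Gtri hG _ (x (MM k + 1)) _
      have h2' : G (x (MM k + 1)) (x (MM k)) (x (MM k)) ≤ 2 * d (MM k) :=
        Grev hG (x (MM k)) (x (MM k + 1))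
      linarith [hsv k, hdn k, hdM k]
    have hub' : ∀ k, s k ≤ ε / 4 + (p : ℝ) * e k := hc5
    have hupper : Tendsto (fun k => ε / 4 + (p : ℝ) * e k) atTop (nhds (ε / 4)) := by
      simpa using (tendsto_const_nhds (x := ε / 4) (f := atTop)).add (he.const_mul (p : ℝ))
    have hst : Tendsto s atTop (nhds (ε / 4)) :=
      tendsto_of_tendsto_of_tendsto_of_le_of_le tendsto_const_nhds hupper hc4 hub'
    have hlo2 : Tendsto (fun k => s k - 2 * e k) atTop (nhds (ε / 4)) := by
      simpa using hst.sub (he.const_mul 2)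
    have hhi1 : Tendsto (fun k => s k + e k) atTop (nhds (ε / 4)) := by
      simpa using hst.add he
    have hut : Tendsto u atTop (nhds (ε / 4)) :=
      tendsto_of_tendsto_of_tendsto_of_le_of_le hlo2 hhi1 hu_lb hu_ub
    have hlo1 : Tendsto (fun k => s k - e k) atTop (nhds (ε / 4)) := by
      simpa using hst.sub he
    have hhi2 : Tendsto (fun k => s k + 2 * e k) atTop (nhds (ε / 4)) := by
      simpa using hst.add (he.const_mul 2)
    have hvt : Tendsto v atTop (nhds (ε / 4)) :=
      tendsto_of_tendsto_of_tendsto_of_le_of_le hlo1 hhi2 hv_lb hv_ub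
    have hlo3 : Tendsto (fun k => s k - 3 * e k) atTop (nhds (ε / 4)) := by
      simpa using hst.sub (he.const_mul 3)
    have hhi3 : Tendsto (fun k => s k + 3 * e k) atTop (nhds (ε / 4)) := by
      simpa using hst.add (he.const_mul 3)
    have hs't : Tendsto s' atTop (nhds (ε / 4)) :=
      tendsto_of_tendsto_of_tendsto_of_le_of_le hlo3 hhi3 hs'_lb hs'_ub
    have hαδt : Tendsto (fun k => α * u k + δ * v k) atTop
        (nhds (α * (ε / 4) + δ * (ε / 4))) :=
      (hut.const_mul α).add (hvt.const_mul δ)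
    have hαδpos : 0 < α * (ε / 4) + δ * (ε / 4) := by
      have hq4 : (0 : ℝ) < ε / 4 := by linarith
      have h := mul_pos hαδ0 hq4
      have he' : α * (ε / 4) + δ * (ε / 4) = (α + δ) * (ε / 4) := by ring
      rw [he']
      exact h
    have hφs' : Tendsto (fun k => φ (s' k)) atTop (nhds (φ (ε / 4))) :=
      hφc (ε / 4) (by positivity) s' (Eventually.of_forall hs'nn) hs't
    have hφαδ : Tendsto (fun k => φ (α * u k + δ * v k)) atTop
        (nhds (φ (α * (ε / 4) + δ * (ε / 4)))) :=
      hφc _ hαδpos.le _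
        ((hαδt.eventually (eventually_gt_nhds hαδpos)).mono (fun k hk => hk.le)) hαδt
    have hq : Tendsto (fun k => ((u k, v k, v k) : ℝ × ℝ × ℝ)) atTop
        (nhds ((ε / 4, ε / 4, ε / 4))) :=
      hut.prodMk_nhds (hvt.prodMk_nhds hvt)
    have hqw : Tendsto (fun k => ((u k, v k, v k) : ℝ × ℝ × ℝ)) atTop
        (nhdsWithin (ε / 4, ε / 4, ε / 4) (Set.Ici 0 ×ˢ Set.Ici 0 ×ˢ Set.Ici 0)) :=
      tendsto_nhdsWithin_of_tendsto_nhds_of_eventually_within _ hq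
        (Eventually.of_forall (fun k => ⟨hunn k, hvnn k, hvnn k⟩))
    have hψlim : Tendsto (fun k => ψ (u k) (v k) (v k)) atTop
        (nhds (ψ (ε / 4) (ε / 4) (ε / 4))) :=
      (hψ.continuous (ε / 4, ε / 4, ε / 4)
        ⟨Set.mem_Ici.mpr (by positivity), Set.mem_Ici.mpr (by positivity),
          Set.mem_Ici.mpr (by positivity)⟩).tendsto.comp hqw
    have hineq : ∀ k, φ (s' k) ≤ φ (α * u k + δ * v k) - ψ (u k) (v k) (v k) :=
      fun k => hK (nn k) (MM k) (hc3 k)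
    have hfinal : φ (ε / 4) ≤ φ (α * (ε / 4) + δ * (ε / 4)) - ψ (ε / 4) (ε / 4) (ε / 4) :=
      le_of_tendsto_of_tendsto' hφs' (hφαδ.sub hψlim) hineq
    have hle : α * (ε / 4) + δ * (ε / 4) ≤ ε / 4 := by
      have hq4 : (0 : ℝ) ≤ ε / 4 := by linarith
      have h := mul_le_mul_of_nonneg_right hαδ1 hq4
      have he' : α * (ε / 4) + δ * (ε / 4) = (α + δ) * (ε / 4) := by ring
      rw [he']
      linarith
    have hmono2 : φ (α * (ε / 4) + δ * (ε / 4)) ≤ φ (ε / 4) :=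
      hφ.mono (Set.mem_Ici.mpr hαδpos.le) (Set.mem_Ici.mpr (by positivity)) hle
    have hψpos : 0 < ψ (ε / 4) (ε / 4) (ε / 4) := by
      rcases lt_or_eq_of_le (hψ.nonneg (ε / 4) (ε / 4) (ε / 4) (by positivity) (by positivity)
          (by positivity)) with h | h
      · exact h
      · exfalso
        have := ((hψ.eq_zero_iff _ _ _ (by positivity) (by positivity)
            (by positivity)).mp h.symm).1
        linarith
    linarith
  refine ⟨hd0t, ?_⟩
  intro ε hε
  obtain ⟨N, hN⟩ := hpair (ε / 4) (by positivity)
  refine ⟨N, fun n hn m hm l hl => ?_⟩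
  have t1 : G (x n) (x m) (x l) ≤ G (x n) (x m) (x m) + G (x m) (x m) (x l) :=
    hG.rectangle (x n) (x m) (x l) (x m)
  have t2 : G (x m) (x m) (x l) ≤ 2 * G (x m) (x l) (x l) := Gtwo hG (x m) (x l)
  have t3 := hN n hn m hm
  have t4 := hN m hm l hl
  linarith


theorem stmt_16 {X : Type*} (G : X → X → X → ℝ) (hG : IsGMetric G)
    (p : ℕ) [NeZero p] (A : Fin p → Set X)
    (hne : ∀ i, (A i).Nonempty) (hcl : ∀ i, GClosed G (A i))
    (T : X → X) (hcyc : ∀ i : Fin p, ∀ x ∈ A i, T x ∈ A (i + 1))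
    (φ : ℝ → ℝ) (ψ : ℝ → ℝ → ℝ → ℝ)
    (hφ : IsAlteringDistance φ) (hψ : IsPsiFun ψ)
    (α δ : ℝ) (hα0 : 0 ≤ α) (hα1 : α ≤ 1 / 2)
    (hαδ0 : 0 < α + δ) (hαδ1 : α + δ ≤ 1)
    (hcontr : ∀ i : Fin p, ∀ x ∈ A i, ∀ y ∈ A (i + 1),
      φ (G (T x) (T y) (T y)) ≤
        φ (α * G x (T y) (T y) + δ * G y y (T x)) -
          ψ (G x (T y) (T y)) (G y y (T x)) (G y y (T x))) :
    ∀ x₀ ∈ ⋃ i, A i,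
      Filter.Tendsto (fun n => G (T^[n] x₀) (T^[n + 1] x₀) (T^[n + 1] x₀))
        Filter.atTop (nhds 0) ∧
      GCauchySeq G (fun n => T^[n] x₀) := by
  intro x₀ hx₀
  obtain ⟨i₀, hi₀⟩ := Set.mem_iUnion.mp hx₀
  have hmem : ∀ n : ℕ, T^[n] x₀ ∈ A (i₀ + (n : Fin p)) := by
    intro n
    induction n with
    | zero => simpa using hi₀
    | succ n ih =>
      rw [Function.iterate_succ_apply']
      have h := hcyc (i₀ + (n : Fin p)) _ ih
      have hc : ((n + 1 : ℕ) : Fin p) = (n : Fin p) + 1 := by push_cast; ring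
      rw [hc, ← add_assoc]
      exact h
  obtain ⟨h1, h2⟩ := cyclic_aux hG hφ hψ hα0 hα1 hαδ0 hαδ1 hcontr
    (fun n => T^[n] x₀) i₀ hmem (fun n => Function.iterate_succ_apply' T n x₀)
  exact ⟨h1, h2⟩
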